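/- arXiv:2512.24230 — 3 statements merged into one kernel-verified Lean document; each statement's English description precedes it below -/
import Mathlib

section
/- For all real σ > 1 and all real t, the logarithmic derivative of the Riemann zeta function satisfies |ζ'(σ + it)/ζ(σ + it)| < 1/(σ − 1) − 1/(2σ²). -/
/-!
For `Re s = σ > 1`, `-ζ'/ζ(s) = ∑ Λ(n) n^{-s}` has nonnegative coefficients, so its modulus is at
most its value `-ζ'(σ)/ζ(σ) = (∑ log n · n^{-σ}) / (∑ n^{-σ})` at the real point. The trapezoid rule
for the convex function `x^{-σ}` bounds the denominator below by `1/(σ-1) + 1/2`. The function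
`log x · x^{-σ}` increases up to `e^{1/σ}` and decreases afterwards, so the numerator is at most its
integral `1/(σ-1)²` over `[1, ∞)` plus its maximum `1/(eσ)`. The quotient of the two bounds is less
than `1/(σ-1) - 1/(2σ²)` because `e > 2`.
-/

open Set Real MeasureTheory Filter Topology
open scoped LSeries.notation ArithmeticFunction.vonMangoldt

theorem convexOn_rpow_of_nonpos {p : ℝ} (hp : p ≤ 0) : ConvexOn ℝ (Ioi 0) fun x : ℝ ↦ x ^ p := by
  refine convexOn_of_hasDerivWithinAt2_nonneg (convex_Ioi 0)
    (f' := fun x ↦ p * x ^ (p - 1)) (f'' := fun x ↦ p * ((p - 1) * x ^ (p - 1 - 1)))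
    (fun x hx ↦ (continuousAt_rpow_const x p (Or.inl hx.ne')).continuousWithinAt) ?_ ?_ ?_ <;>
    rw [interior_Ioi] <;> intro x hx
  · exact (hasDerivAt_rpow_const (Or.inl hx.ne')).hasDerivWithinAt
  · exact ((hasDerivAt_rpow_const (Or.inl hx.ne')).const_mul p).hasDerivWithinAt
  · have := rpow_pos_of_pos hx (p - 1 - 1)
    have : 0 ≤ p * (p - 1) := mul_nonneg_of_nonpos_of_nonpos hp (by linarith)
    rw [← mul_assoc]; positivity

theorem ConvexOn.le_chord {f : ℝ → ℝ} {a b x : ℝ} (hf : ConvexOn ℝ (Icc a b) f) (hab : a < b)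
    (hx : x ∈ Icc a b) : f x ≤ f a + (f b - f a) / (b - a) * (x - a) := by
  have hba : 0 < b - a := sub_pos.2 hab
  calc f x = f (((b - x) / (b - a)) • a + ((x - a) / (b - a)) • b) := by
        congr 1; simp only [smul_eq_mul]; field_simp; ring
    _ ≤ ((b - x) / (b - a)) • f a + ((x - a) / (b - a)) • f b :=
        hf.2 (left_mem_Icc.2 hab.le) (right_mem_Icc.2 hab.le)
          (div_nonneg (sub_nonneg.2 hx.2) hba.le) (div_nonneg (sub_nonneg.2 hx.1) hba.le)
          (by field_simp; ring)
    _ = f a + (f b - f a) / (b - a) * (x - a) := by simp only [smul_eq_mul]; field_simp; ring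

theorem ConvexOn.intervalIntegral_le_trapezoid {f : ℝ → ℝ} {a b : ℝ} (hab : a ≤ b)
    (hf : ConvexOn ℝ (Icc a b) f) (hfi : IntervalIntegrable f volume a b) :
    ∫ x in a..b, f x ≤ (b - a) * (f a + f b) / 2 := by
  rcases hab.eq_or_lt with rfl | hab
  · simp
  have hlin : IntervalIntegrable (fun x ↦ (f b - f a) / (b - a) * (x - a)) volume a b :=
    (continuous_const.mul (continuous_id.sub continuous_const)).intervalIntegrable _ _
  calc ∫ x in a..b, f x ≤ ∫ x in a..b, (f a + (f b - f a) / (b - a) * (x - a)) :=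
        intervalIntegral.integral_mono_on hab.le hfi (intervalIntegrable_const.add hlin)
          fun x hx ↦ hf.le_chord hab hx
    _ = (b - a) * (f a + f b) / 2 := by
        rw [intervalIntegral.integral_add intervalIntegrable_const hlin,
          intervalIntegral.integral_const_mul, intervalIntegral.integral_comp_sub_right (fun x ↦ x)]
        simp only [integral_id, intervalIntegral.integral_const, smul_eq_mul]
        field_simp [(sub_pos.2 hab).ne']
        ring

theorem MeasureTheory.IntegrableOn.intervalIntegrable_of_Ioi {f : ℝ → ℝ} {a b c : ℝ}
    (hfi : IntegrableOn f (Ioi a)) (hab : a ≤ b) (hbc : b ≤ c) : IntervalIntegrable f volume b c :=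
  (intervalIntegrable_iff_integrableOn_Ioc_of_le hbc).2 <|
    hfi.mono_set <| Ioc_subset_Ioi_self.trans (Ioi_subset_Ioi hab)

theorem ConvexOn.intervalIntegral_add_half_le_sum {f : ℝ → ℝ} {a : ℝ} (hf : ConvexOn ℝ (Ici a) f)
    (hfi : IntegrableOn f (Ioi a)) (N : ℕ) :
    (∫ x in a..a + N, f x) + (f a + f (a + N)) / 2 ≤ ∑ n ∈ Finset.range (N + 1), f (a + n) := by
  induction N with
  | zero => simp
  | succ N ih =>
    have hN : a ≤ a + N := le_add_of_nonneg_right N.cast_nonneg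
    have hN1 : a + N ≤ a + ↑(N + 1) := by push_cast; linarith
    have hstep : ∫ x in a + N..a + ↑(N + 1), f x ≤ (f (a + N) + f (a + ↑(N + 1))) / 2 := by
      have h := (hf.subset (Icc_subset_Ici_self.trans (Ici_subset_Ici.2 hN))
        (convex_Icc _ _)).intervalIntegral_le_trapezoid hN1 (hfi.intervalIntegrable_of_Ioi hN hN1)
      rwa [show a + ↑(N + 1) - (a + N) = 1 by push_cast; ring, one_mul] at h
    rw [← intervalIntegral.integral_add_adjacent_intervals (hfi.intervalIntegrable_of_Ioi le_rfl hN)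
      (hfi.intervalIntegrable_of_Ioi hN hN1), Finset.sum_range_succ]
    linarith

theorem ConvexOn.integral_Ioi_add_half_le_tsum {f : ℝ → ℝ} {a : ℝ} (hf : ConvexOn ℝ (Ici a) f)
    (hf₀ : ∀ n : ℕ, 0 ≤ f (a + n)) (hfi : IntegrableOn f (Ioi a))
    (hfs : Summable fun n : ℕ ↦ f (a + n)) :
    (∫ x in Ioi a, f x) + f a / 2 ≤ ∑' n : ℕ, f (a + n) := by
  have hlim : Tendsto (fun N : ℕ ↦ (∫ x in a..a + N, f x) + f a / 2) atTop
      (𝓝 ((∫ x in Ioi a, f x) + f a / 2)) :=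
    (intervalIntegral_tendsto_integral_Ioi a hfi
      (tendsto_atTop_add_const_left _ a tendsto_natCast_atTop_atTop)).add_const _
  refine le_of_tendsto' hlim fun N ↦ ?_
  calc (∫ x in a..a + N, f x) + f a / 2 ≤ (∫ x in a..a + N, f x) + (f a + f (a + N)) / 2 := by
        linarith [hf₀ N]
    _ ≤ ∑ n ∈ Finset.range (N + 1), f (a + n) := hf.intervalIntegral_add_half_le_sum hfi N
    _ ≤ ∑' n : ℕ, f (a + n) := hfs.sum_le_tsum _ fun n _ ↦ hf₀ n

theorem one_div_sub_one_add_half_le_tsum_rpow_neg {σ : ℝ} (hσ : 1 < σ) :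
    1 / (σ - 1) + 1 / 2 ≤ ∑' n : ℕ, (1 + n : ℝ) ^ (-σ) := by
  have hconv : ConvexOn ℝ (Ici 1) fun x : ℝ ↦ x ^ (-σ) :=
    (convexOn_rpow_of_nonpos (by linarith)).subset (fun x (hx : 1 ≤ x) ↦ one_pos.trans_le hx)
      (convex_Ici 1)
  have hsum : Summable fun n : ℕ ↦ (1 + n : ℝ) ^ (-σ) := by
    have := (summable_nat_add_iff 1).2 (Real.summable_nat_rpow.2 (by linarith : -σ < -1))
    simpa [add_comm] using this
  have h := hconv.integral_Ioi_add_half_le_tsum (fun n ↦ by positivity)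
    (integrableOn_Ioi_rpow_of_lt (by linarith) one_pos) hsum
  rw [integral_Ioi_rpow_of_lt (by linarith) one_pos] at h
  convert h using 2
  · rw [one_rpow, show -σ + 1 = -(σ - 1) by ring, div_neg]; ring
  · simp

theorem one_div_sub_one_add_half_le_norm_riemannZeta {σ : ℝ} (hσ : 1 < σ) :
    1 / (σ - 1) + 1 / 2 ≤ ‖riemannZeta σ‖ := by
  have hζ : riemannZeta σ = ((∑' n : ℕ, (1 + n : ℝ) ^ (-σ) : ℝ) : ℂ) := by
    rw [zeta_eq_tsum_one_div_nat_add_one_cpow (by simpa using hσ), Complex.ofReal_tsum]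
    refine tsum_congr fun n ↦ ?_
    rw [rpow_neg (by positivity), Complex.ofReal_inv, Complex.ofReal_cpow (by positivity)]
    push_cast
    rw [one_div, add_comm]
  rw [hζ, Complex.norm_real, norm_of_nonneg (tsum_nonneg fun n ↦ by positivity)]
  exact one_div_sub_one_add_half_le_tsum_rpow_neg hσ

theorem min_le_of_monotoneOn_of_antitoneOn {f : ℝ → ℝ} {a b c x : ℝ}
    (hmono : MonotoneOn f (Icc a c)) (hanti : AntitoneOn f (Icc c b)) (hx : x ∈ Icc a b) :
    min (f a) (f b) ≤ f x := by
  rcases le_total x c with hxc | hcx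
  · exact (min_le_left _ _).trans <| hmono ⟨le_rfl, hx.1.trans hxc⟩ ⟨hx.1, hxc⟩ hx.1
  · exact (min_le_right _ _).trans <| hanti ⟨hcx, hx.2⟩ ⟨hcx.trans hx.2, le_rfl⟩ hx.2

theorem add_le_max_add_intervalIntegral {f : ℝ → ℝ} {a c : ℝ}
    (hmono : MonotoneOn f (Icc a c)) (hanti : AntitoneOn f (Icc c (a + 1)))
    (hfi : IntervalIntegrable f volume a (a + 1)) :
    f a + f (a + 1) ≤ max (f a) (f (a + 1)) + ∫ x in a..a + 1, f x := by
  have hmin : ∫ _ in a..a + 1, min (f a) (f (a + 1)) ≤ ∫ x in a..a + 1, f x :=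
    intervalIntegral.integral_mono_on (by linarith) intervalIntegrable_const hfi
      fun x hx ↦ min_le_of_monotoneOn_of_antitoneOn hmono hanti hx
  rw [intervalIntegral.integral_const, smul_eq_mul, add_sub_cancel_left, one_mul] at hmin
  linarith [min_add_max (f a) (f (a + 1))]

theorem hasDerivAt_log_mul_rpow_neg (σ : ℝ) {x : ℝ} (hx : 0 < x) :
    HasDerivAt (fun y ↦ log y * y ^ (-σ)) (x ^ (-σ - 1) * (1 - σ * log x)) x := by
  refine ((hasDerivAt_log hx.ne').mul (hasDerivAt_rpow_const (Or.inl hx.ne'))).congr_deriv ?_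
  rw [rpow_sub_one hx.ne']
  field_simp
  ring

theorem intervalIntegrable_log_mul_rpow_neg (σ : ℝ) {a b : ℝ} (ha : 0 < a) (hb : 0 < b) :
    IntervalIntegrable (fun x ↦ log x * x ^ (-σ)) volume a b :=
  ContinuousOn.intervalIntegrable fun _ hx ↦
    (hasDerivAt_log_mul_rpow_neg σ (lt_min ha hb |>.trans_le hx.1)).continuousAt.continuousWithinAt

theorem monotoneOn_log_mul_rpow_neg {σ : ℝ} (hσ : 0 < σ) :
    MonotoneOn (fun x ↦ log x * x ^ (-σ)) (Ioc 0 (exp σ⁻¹)) := by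
  refine monotoneOn_of_hasDerivWithinAt_nonneg (convex_Ioc _ _)
    (fun x hx ↦ (hasDerivAt_log_mul_rpow_neg σ hx.1).continuousAt.continuousWithinAt)
    (fun x hx ↦ (hasDerivAt_log_mul_rpow_neg σ (interior_subset hx).1).hasDerivWithinAt) ?_
  rw [interior_Ioc]
  intro x ⟨hx0, hx⟩
  have : σ * log x ≤ 1 := by
    rw [← le_div_iff₀' hσ, one_div, log_le_iff_le_exp hx0]
    exact hx.le
  have := rpow_pos_of_pos hx0 (-σ - 1)
  nlinarith

theorem antitoneOn_log_mul_rpow_neg {σ : ℝ} (hσ : 0 < σ) :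
    AntitoneOn (fun x ↦ log x * x ^ (-σ)) (Ici (exp σ⁻¹)) := by
  have hpos : ∀ x ∈ Ici (exp σ⁻¹), 0 < x := fun x hx ↦ (exp_pos _).trans_le hx
  refine antitoneOn_of_hasDerivWithinAt_nonpos (convex_Ici _)
    (fun x hx ↦ (hasDerivAt_log_mul_rpow_neg σ (hpos x hx)).continuousAt.continuousWithinAt)
    (fun x hx ↦ (hasDerivAt_log_mul_rpow_neg σ (hpos x (interior_subset hx))).hasDerivWithinAt) ?_
  rw [interior_Ici]
  intro x (hx : exp σ⁻¹ < x)
  have hx0 : 0 < x := (exp_pos _).trans hx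
  have : 1 ≤ σ * log x := by
    rw [← div_le_iff₀' hσ, one_div, le_log_iff_exp_le hx0]
    exact hx.le
  have := rpow_pos_of_pos hx0 (-σ - 1)
  nlinarith

theorem log_mul_rpow_neg_le {σ : ℝ} (hσ : 0 < σ) {x : ℝ} (hx : 0 < x) :
    log x * x ^ (-σ) ≤ 1 / (exp 1 * σ) := by
  have hpeak : log (exp σ⁻¹) * exp σ⁻¹ ^ (-σ) = 1 / (exp 1 * σ) := by
    rw [log_exp, ← exp_mul, mul_neg, inv_mul_cancel₀ hσ.ne', exp_neg]
    field_simp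
  rw [← hpeak]
  rcases le_total x (exp σ⁻¹) with hxc | hcx
  · exact monotoneOn_log_mul_rpow_neg hσ ⟨hx, hxc⟩ ⟨exp_pos _, le_rfl⟩ hxc
  · exact antitoneOn_log_mul_rpow_neg hσ (mem_Ici.2 le_rfl) hcx hcx

theorem integral_log_mul_rpow_neg_le {σ : ℝ} (hσ : 1 < σ) {b : ℝ} (hb : 1 ≤ b) :
    ∫ x in (1 : ℝ)..b, log x * x ^ (-σ) ≤ 1 / (σ - 1) ^ 2 := by
  have hσ1 : σ - 1 ≠ 0 := by linarith
  set F : ℝ → ℝ := fun x ↦ -(((σ - 1) * log x + 1) * x ^ (1 - σ)) / (σ - 1) ^ 2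
  have hF : ∀ x ∈ uIcc 1 b, HasDerivAt F (log x * x ^ (-σ)) x := by
    intro x hx
    rw [uIcc_of_le hb] at hx
    have hx0 : 0 < x := one_pos.trans_le hx.1
    refine ((((hasDerivAt_log hx0.ne').const_mul (σ - 1)).add_const 1).mul
      (hasDerivAt_rpow_const (p := 1 - σ) (Or.inl hx0.ne'))).neg.div_const ((σ - 1) ^ 2)
      |>.congr_deriv ?_
    rw [show 1 - σ - 1 = -σ by ring, show 1 - σ = -σ + 1 by ring, rpow_add hx0, rpow_one]
    field_simp
    ring
  rw [intervalIntegral.integral_eq_sub_of_hasDerivAt hF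
    (intervalIntegrable_log_mul_rpow_neg σ one_pos (one_pos.trans_le hb))]
  have hFb : F b ≤ 0 := div_nonpos_of_nonpos_of_nonneg (neg_nonpos.2 <|
    mul_nonneg (by nlinarith [log_nonneg hb]) (rpow_nonneg (by linarith) _)) (sq_nonneg _)
  have hF1 : F 1 = -(1 / (σ - 1) ^ 2) := by simp [F, neg_div]
  linarith

theorem log_mul_rpow_neg_two_add_three_le {σ : ℝ} (hσ : 0 < σ) :
    log 2 * 2 ^ (-σ) + log 3 * 3 ^ (-σ) ≤
      1 / (exp 1 * σ) + ∫ x in (2 : ℝ)..3, log x * x ^ (-σ) := by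
  have h := add_le_max_add_intervalIntegral (a := 2) (c := exp σ⁻¹)
    ((monotoneOn_log_mul_rpow_neg hσ).mono fun y hy ↦ ⟨by linarith [hy.1], hy.2⟩)
    ((antitoneOn_log_mul_rpow_neg hσ).mono fun y hy ↦ hy.1)
    (intervalIntegrable_log_mul_rpow_neg σ two_pos (by norm_num))
  norm_num only at h
  linarith [max_le (log_mul_rpow_neg_le hσ two_pos) (log_mul_rpow_neg_le hσ three_pos)]

theorem tsum_log_mul_rpow_neg_le {σ : ℝ} (hσ : 1 < σ) :
    ∑' n : ℕ, log n * (n : ℝ) ^ (-σ) ≤ 1 / (σ - 1) ^ 2 + 1 / (exp 1 * σ) := by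
  set g : ℝ → ℝ := fun x ↦ log x * x ^ (-σ) with hg
  have hσ0 : 0 < σ := by linarith
  have hanti : AntitoneOn g (Ici 3) :=
    (antitoneOn_log_mul_rpow_neg hσ0).mono <| Ici_subset_Ici.2 <|
      (exp_le_exp.2 (inv_le_one_of_one_le₀ hσ.le)).trans (exp_one_lt_d9.trans (by norm_num)).le
  have hg_nat : ∀ n : ℕ, 0 ≤ g n := fun n ↦
    mul_nonneg (log_natCast_nonneg n) (rpow_nonneg n.cast_nonneg _)
  have hint : ∀ {a b : ℝ}, 1 ≤ a → 1 ≤ b → IntervalIntegrable g volume a b := fun ha hb ↦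
    intervalIntegrable_log_mul_rpow_neg σ (one_pos.trans_le ha) (one_pos.trans_le hb)
  refine tsum_le_of_sum_range_le hg_nat fun N ↦ ?_
  have hN : (1 : ℝ) ≤ 3 + N := by linarith [N.cast_nonneg (α := ℝ)]
  have h12 : 0 ≤ ∫ x in (1 : ℝ)..2, g x := intervalIntegral.integral_nonneg one_le_two
    fun x hx ↦ mul_nonneg (log_nonneg hx.1) (rpow_nonneg (by linarith [hx.1]) _)
  have h123 := intervalIntegral.integral_add_adjacent_intervals
    (hint le_rfl one_le_two) (hint one_le_two (by norm_num : (1 : ℝ) ≤ 3))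
  have h13N := intervalIntegral.integral_add_adjacent_intervals
    (hint le_rfl (by norm_num : (1 : ℝ) ≤ 3)) (hint (by norm_num : (1 : ℝ) ≤ 3) hN)
  calc ∑ n ∈ Finset.range N, g n
      ≤ ∑ n ∈ Finset.range (4 + N), g n :=
        Finset.sum_le_sum_of_subset_of_nonneg (Finset.range_subset_range.2 (by omega))
          fun n _ _ ↦ hg_nat n
    _ = g 2 + g 3 + ∑ i ∈ Finset.range N, g (3 + ↑(i + 1)) := by
        simp only [hg, Finset.sum_range_add, Finset.sum_range_succ, Finset.sum_range_zero,
          Nat.cast_zero, Nat.cast_one, Nat.cast_ofNat, Nat.cast_add, log_zero, log_one, zero_mul,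
          zero_add]
        ring_nf
    _ ≤ (1 / (exp 1 * σ) + ∫ x in (2 : ℝ)..3, g x) + ∫ x in (3 : ℝ)..3 + N, g x :=
        add_le_add (log_mul_rpow_neg_two_add_three_le hσ0)
          (hanti.mono Icc_subset_Ici_self).sum_le_integral
    _ ≤ 1 / (exp 1 * σ) + ∫ x in (1 : ℝ)..3 + N, g x := by linarith
    _ ≤ 1 / (σ - 1) ^ 2 + 1 / (exp 1 * σ) := by
        linarith [integral_log_mul_rpow_neg_le hσ hN]

open scoped ComplexOrder in
theorem LSeries.norm_LSeries_le_norm_LSeries_re {a : ℕ → ℂ} (ha : 0 ≤ a) {s : ℂ}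
    (hs : LSeriesSummable a s) : ‖LSeries a s‖ ≤ ‖LSeries a s.re‖ := by
  have hterm : ∀ n, ‖term a s n‖ = ‖term a s.re n‖ := fun n ↦ by simp [norm_term_eq]
  have hre : ((∑' n, ‖term a s.re n‖ : ℝ) : ℂ) = LSeries a s.re := by
    rw [Complex.ofReal_tsum, LSeries]
    exact tsum_congr fun n ↦ Complex.norm_of_nonneg' (term_nonneg (ha n) _)
  calc ‖LSeries a s‖ ≤ ∑' n, ‖term a s n‖ := norm_tsum_le_tsum_norm hs.norm
    _ = ∑' n, ‖term a s.re n‖ := tsum_congr hterm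
    _ = ‖LSeries a s.re‖ := by
        rw [← hre, Complex.norm_real, norm_of_nonneg (tsum_nonneg fun n ↦ norm_nonneg _)]

theorem norm_deriv_riemannZeta_le {s : ℂ} (hs : 1 < s.re) :
    ‖deriv riemannZeta s‖ ≤ 1 / (s.re - 1) ^ 2 + 1 / (exp 1 * s.re) := by
  have habs : LSeries.abscissaOfAbsConv 1 < s.re := by
    rw [LSeries.abscissaOfAbsConv_one]; exact_mod_cast hs
  have hζ : deriv riemannZeta s = -LSeries (LSeries.logMul 1) s := by
    rw [← LSeries_deriv habs]
    refine (Filter.EventuallyEq.deriv_eq ?_).symm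
    filter_upwards [(isOpen_lt continuous_const Complex.continuous_re).mem_nhds hs]
      with z hz using LSeries_one_eq_riemannZeta hz
  have hterm : ∀ n : ℕ, ‖LSeries.term (LSeries.logMul 1) s n‖ = log n * (n : ℝ) ^ (-s.re) := by
    intro n
    rcases eq_or_ne n 0 with rfl | hn
    · simp
    · rw [LSeries.norm_term_eq, if_neg hn, rpow_neg n.cast_nonneg, ← div_eq_mul_inv,
        LSeries.logMul, Pi.one_apply, mul_one, ← Complex.natCast_log, Complex.norm_real,
        norm_of_nonneg (log_natCast_nonneg n)]
  rw [hζ, norm_neg]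
  calc ‖LSeries (LSeries.logMul 1) s‖ ≤ ∑' n, ‖LSeries.term (LSeries.logMul 1) s n‖ :=
        norm_tsum_le_tsum_norm (LSeriesSummable_logMul_of_lt_re habs).norm
    _ = ∑' n : ℕ, log n * (n : ℝ) ^ (-s.re) := tsum_congr hterm
    _ ≤ _ := tsum_log_mul_rpow_neg_le hs

theorem norm_logDeriv_riemannZeta_le {s : ℂ} (hs : 1 < s.re) :
    ‖deriv riemannZeta s / riemannZeta s‖ ≤ ‖deriv riemannZeta s.re / riemannZeta s.re‖ := by
  have hL : ∀ {z : ℂ}, 1 < z.re → ‖deriv riemannZeta z / riemannZeta z‖ = ‖L ↗Λ z‖ := fun hz ↦ by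
    rw [ArithmeticFunction.LSeries_vonMangoldt_eq_deriv_riemannZeta_div hz, neg_div, norm_neg]
  rw [hL hs, hL (by simpa using hs)]
  exact LSeries.norm_LSeries_le_norm_LSeries_re
    (fun n ↦ Complex.zero_le_real.2 ArithmeticFunction.vonMangoldt_nonneg)
    (ArithmeticFunction.LSeriesSummable_vonMangoldt hs)

theorem delange_quotient_lt {σ : ℝ} (hσ : 1 < σ) :
    (1 / (σ - 1) ^ 2 + 1 / (exp 1 * σ)) / (1 / (σ - 1) + 1 / 2) <
      1 / (σ - 1) - 1 / (2 * σ ^ 2) := by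
  have hσ1 : 0 < σ - 1 := by linarith
  have hσ0 : 0 < σ := by linarith
  rw [div_lt_iff₀ (by positivity)]
  have hprod : (1 / (σ - 1) - 1 / (2 * σ ^ 2)) * (1 / (σ - 1) + 1 / 2) =
      1 / (σ - 1) ^ 2 + (2 * σ + 1) / (4 * σ ^ 2) := by
    field_simp
    ring
  have hexp : 1 / (exp 1 * σ) < (2 * σ + 1) / (4 * σ ^ 2) := by
    rw [div_lt_div_iff₀ (by positivity) (by positivity)]
    nlinarith [exp_one_gt_d9]
  linarith

/-- Delange's bound: for `σ > 1` and any real `t`,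
`|ζ'(σ + it)/ζ(σ + it)| < 1/(σ − 1) − 1/(2σ²)`. -/
theorem zeta_log_deriv_bound (σ t : ℝ) (hσ : 1 < σ) :
    ‖deriv riemannZeta (σ + t * Complex.I) /
        riemannZeta (σ + t * Complex.I)‖ < 1 / (σ - 1) - 1 / (2 * σ ^ 2) := by
  have hs : 1 < (σ + t * Complex.I).re := by simpa using hσ
  have hσ' : 1 < (σ : ℂ).re := by simpa using hσ
  have hZ : 0 < 1 / (σ - 1) + 1 / 2 := by
    have : 0 < σ - 1 := by linarith
    positivity
  calc ‖deriv riemannZeta (σ + t * Complex.I) / riemannZeta (σ + t * Complex.I)‖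
      ≤ ‖deriv riemannZeta σ‖ / ‖riemannZeta σ‖ := by
        simpa [norm_div] using norm_logDeriv_riemannZeta_le hs
    _ ≤ (1 / (σ - 1) ^ 2 + 1 / (exp 1 * σ)) / (1 / (σ - 1) + 1 / 2) :=
        div_le_div₀ (by positivity) (by simpa using norm_deriv_riemannZeta_le hσ') hZ
          (one_div_sub_one_add_half_le_norm_riemannZeta hσ)
    _ < 1 / (σ - 1) - 1 / (2 * σ ^ 2) := delange_quotient_lt hσ
end

section
/- For all n ≥ exp(exp(10)), the largest prime gap up to p_n satisfies M(p_n) ≤ 280·p_n^{139/140}·(1 + 2/p_n^{1/140})^{139} ≤ p_n/(3·log² p_n), assuming that for every integer m ≥ 1 there is a prime strictly between m^140 and (m+1)^140. -/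
open Real

/-- `pp 0 = 1`, and `pp n` is the `n`-th prime for `n ≥ 1`. -/
noncomputable def pp : ℕ → ℕ
  | 0 => 1
  | (n + 1) => Nat.nth Nat.Prime n

-- integer binomial-type bound
lemma pow_step (m : ℕ) : ∀ k : ℕ, (m+2)^(k+1) ≤ m^(k+1) + 2*(k+1)*(m+2)^k := by
  intro k
  induction k with
  | zero => simp
  | succ k ih =>
    have h1 : (m+2)^(k+2) = (m+2) * (m+2)^(k+1) := by ring
    have h2 : (m+2) * (m+2)^(k+1) ≤ (m+2) * (m^(k+1) + 2*(k+1)*(m+2)^k) :=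
      Nat.mul_le_mul_left _ ih
    have h3 : m^(k+1) ≤ (m+2)^(k+1) := Nat.pow_le_pow_left (by omega) _
    have h4 : (m+2)*(m+2)^k = (m+2)^(k+1) := by ring
    calc (m+2)^(k+2) = (m+2) * (m+2)^(k+1) := h1
      _ ≤ (m+2) * (m^(k+1) + 2*(k+1)*(m+2)^k) := h2
      _ = m * m^(k+1) + 2*m^(k+1) + 2*(k+1)*((m+2)*(m+2)^k) := by ring
      _ = m^(k+2) + 2*m^(k+1) + 2*(k+1)*(m+2)^(k+1) := by rw [h4]; ring
      _ ≤ m^(k+2) + 2*(m+2)^(k+1) + 2*(k+1)*(m+2)^(k+1) := by omega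
      _ = m^(k+2) + 2*(k+1+1)*(m+2)^(k+1) := by ring

lemma key_eq (X : ℝ) (hX : 0 < X) :
    280 * X ^ ((139 : ℝ) / 140) * (1 + 2 / X ^ ((1 : ℝ) / 140)) ^ (139 : ℕ)
      = 280 * (X ^ ((1 : ℝ) / 140) + 2) ^ (139 : ℕ) := by
  set y := X ^ ((1 : ℝ) / 140) with hy
  have hy0 : 0 < y := Real.rpow_pos_of_pos hX _
  have h139 : X ^ ((139 : ℝ) / 140) = y ^ (139 : ℕ) := by
    rw [hy, ← Real.rpow_natCast (X ^ ((1:ℝ)/140)) 139, ← Real.rpow_mul hX.le]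
    norm_num
  rw [h139, mul_assoc, ← mul_pow, show y * (1 + 2 / y) = y + 2 by field_simp]

lemma part2 (X : ℝ) (hX : Real.exp (Real.exp 10) ≤ X) :
    280 * (X ^ ((1 : ℝ) / 140) + 2) ^ (139 : ℕ) ≤ X / (3 * (Real.log X) ^ 2) := by
  have hX0 : (0:ℝ) < X := lt_of_lt_of_le (Real.exp_pos _) hX
  set t := Real.log X with htdef
  have hexp10 : (21980 : ℝ) ≤ Real.exp 10 := by
    have h1 : (2.7182818283 : ℝ) ^ (10:ℕ) ≤ Real.exp 1 ^ (10:ℕ) :=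
      pow_le_pow_left₀ (by norm_num) Real.exp_one_gt_d9.le _
    rw [Real.exp_one_pow] at h1
    norm_num at h1 ⊢
    linarith
  have ht : Real.exp 10 ≤ t := by
    rw [htdef, show Real.exp 10 = Real.log (Real.exp (Real.exp 10)) from (Real.log_exp _).symm]
    exact Real.log_le_log (Real.exp_pos _) hX
  have ht' : (21980 : ℝ) ≤ t := le_trans hexp10 ht
  set s := t / 140 with hsdef
  have hs : (157 : ℝ) ≤ s := by rw [hsdef]; linarith
  set y := X ^ ((1 : ℝ) / 140) with hydef
  have hy0 : 0 < y := Real.rpow_pos_of_pos hX0 _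
  have hyexp : y = Real.exp s := by
    rw [hydef, Real.rpow_def_of_pos hX0, hsdef, htdef]
    ring_nf
  -- y ≥ 4000
  have hy4000 : (4000 : ℝ) ≤ y := by
    have h1 : s/2 + 1 ≤ Real.exp (s/2) := Real.add_one_le_exp _
    have h2 : Real.exp s = Real.exp (s/2) * Real.exp (s/2) := by
      rw [← Real.exp_add]; ring_nf
    nlinarith [Real.exp_pos (s/2)]
  -- y ≥ 1680 t²
  have hy1680 : 1680 * t^2 ≤ y := by
    set u := s / 20 with hudef
    have hu : (157/20 : ℝ) ≤ u := by rw [hudef]; linarith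
    have h1 : u + 1 ≤ Real.exp u := Real.add_one_le_exp _
    have h2 : Real.exp s = (Real.exp u)^(20:ℕ) := by
      rw [← Real.exp_nat_mul, hudef]; ring_nf
    have hu0 : (0:ℝ) ≤ u := by linarith
    have h3 : u^(20:ℕ) ≤ (Real.exp u)^(20:ℕ) := pow_le_pow_left₀ hu0 (by linarith) _
    have h4 : (13171200000 : ℝ) ≤ u^(18:ℕ) := by
      calc (13171200000 : ℝ) ≤ (157/20)^(18:ℕ) := by norm_num
        _ ≤ u^(18:ℕ) := pow_le_pow_left₀ (by norm_num) hu _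
    have h5 : 13171200000 * u^2 ≤ u^(20:ℕ) := by
      calc (13171200000:ℝ) * u^2 ≤ u^(18:ℕ) * u^2 :=
            mul_le_mul_of_nonneg_right h4 (sq_nonneg u)
        _ = u^(20:ℕ) := by ring
    have ht20 : t = 140 * s := by rw [hsdef]; ring
    have : 1680 * t^2 = 13171200000 * u^2 := by rw [ht20, hudef]; ring
    rw [this, hyexp, h2]
    exact le_trans h5 h3
  -- main chain
  have ht0 : (0:ℝ) < t := by linarith
  have h3t : (0:ℝ) < 3 * t^2 := by positivity
  rw [le_div_iff₀ h3t]
  have hstep1 : (y + 2)^(139:ℕ) ≤ (2001/2000 * y)^(139:ℕ) := by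
    apply pow_le_pow_left₀ (by linarith) (by linarith)
  have hstep2 : ((2001:ℝ)/2000)^(139:ℕ) ≤ 2 := by norm_num
  have hX140 : X = y^(140:ℕ) := by
    rw [hydef, ← Real.rpow_natCast (X ^ ((1:ℝ)/140)) 140, ← Real.rpow_mul hX0.le]
    norm_num
  calc 280 * (y + 2)^(139:ℕ) * (3 * t^2)
      ≤ 280 * ((2001/2000 * y)^(139:ℕ)) * (3*t^2) := by
        have := mul_le_mul_of_nonneg_right (mul_le_mul_of_nonneg_left hstep1 (by norm_num : (0:ℝ) ≤ 280)) h3t.le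
        linarith
    _ = 280 * ((2001/2000:ℝ)^(139:ℕ)) * y^(139:ℕ) * (3*t^2) := by rw [mul_pow]; ring
    _ ≤ 280 * 2 * y^(139:ℕ) * (3*t^2) := by
        have hyp : (0:ℝ) ≤ y^(139:ℕ) := by positivity
        nlinarith [mul_le_mul_of_nonneg_right hstep2 hyp]
    _ = (1680 * t^2) * y^(139:ℕ) := by ring
    _ ≤ y * y^(139:ℕ) := mul_le_mul_of_nonneg_right hy1680 (by positivity)
    _ = y^(140:ℕ) := by ring
    _ = X := hX140.symm

lemma gap_final' (x y : ℝ) (hx : 0 ≤ x) (h : x^(140:ℕ) ≤ y) (hy : 0 < y) :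
    280*(x+2)^(139:ℕ) ≤ 280 * y ^ ((139 : ℝ) / 140) *
      (1 + 2 / y ^ ((1 : ℝ) / 140)) ^ (139 : ℕ) := by
  rw [key_eq _ hy]
  have hm_le : x ≤ y ^ ((1:ℝ)/140) := by
    calc x = (x^(140:ℕ)) ^ ((1:ℝ)/140) := by
          rw [← Real.rpow_natCast x 140, ← Real.rpow_mul hx]
          norm_num
      _ ≤ y ^ ((1:ℝ)/140) := Real.rpow_le_rpow (by positivity) h (by norm_num)
  gcongr <;> linarith

lemma pp_ge (n : ℕ) (hn : 1 ≤ n) : n ≤ pp n := by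
  obtain ⟨k, rfl⟩ : ∃ k, n = k + 1 := ⟨n - 1, by omega⟩
  have := Nat.add_two_le_nth_prime k
  simp only [pp]
  omega

set_option maxRecDepth 20000 in
set_option maxHeartbeats 800000 in
/-- Assuming a prime in every interval `(m^140, (m+1)^140)`, the largest prime gap up to
`p_n` satisfies `M(p_n) ≤ 280 p_n^{139/140} (1 + 2/p_n^{1/140})^{139} ≤ p_n/(3 log² p_n)`
for `n ≥ exp (exp 10)`. -/
theorem largest_prime_gap_bound
    (hint : ∀ m : ℕ, 1 ≤ m → ∃ q : ℕ, Nat.Prime q ∧ m ^ 140 < q ∧ q < (m + 1) ^ 140)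
    (n : ℕ) (hn : Real.exp (Real.exp 10) ≤ (n : ℝ)) :
    (∀ ℓ : ℕ, 1 ≤ ℓ → pp (ℓ + 1) ≤ pp n →
      ((pp (ℓ + 1) - pp ℓ : ℕ) : ℝ) ≤
        280 * (pp n : ℝ) ^ ((139 : ℝ) / 140) *
          (1 + 2 / (pp n : ℝ) ^ ((1 : ℝ) / 140)) ^ (139 : ℕ)) ∧
    280 * (pp n : ℝ) ^ ((139 : ℝ) / 140) *
        (1 + 2 / (pp n : ℝ) ^ ((1 : ℝ) / 140)) ^ (139 : ℕ) ≤
      (pp n : ℝ) / (3 * (Real.log (pp n)) ^ 2) := by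
  have hinf := Nat.infinite_setOf_prime
  have hone : (1:ℝ) ≤ Real.exp (Real.exp 10) := Real.one_le_exp (Real.exp_pos _).le
  have hn1 : 1 ≤ n := by
    rcases Nat.eq_zero_or_pos n with h | h
    · subst h
      simp only [Nat.cast_zero] at hn
      linarith [Real.exp_pos (Real.exp 10)]
    · exact h
  have hXexp : Real.exp (Real.exp 10) ≤ (pp n : ℝ) := by
    have := pp_ge n hn1
    have h2 : (n:ℝ) ≤ (pp n : ℝ) := by exact_mod_cast this
    linarith
  have hX0 : (0:ℝ) < (pp n : ℝ) := by linarith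
  obtain ⟨n', rfl⟩ : ∃ n', n = n' + 1 := ⟨n - 1, by omega⟩
  simp only [pp] at hXexp hX0 ⊢
  constructor
  · intro ℓ hℓ hln
    obtain ⟨k, rfl⟩ : ∃ k, ℓ = k + 1 := ⟨ℓ - 1, by omega⟩
    simp only [pp] at hln ⊢
    set p := Nat.nth Nat.Prime k with hpdef
    clear_value p
    have hp : p.Prime := by rw [hpdef]; exact Nat.prime_nth_prime k
    have hp2 : 2 ≤ p := hp.two_le
    have hPex : ∃ j, p < (j+1)^140 := ⟨p, by
      have : p + 1 ≤ (p+1)^140 := Nat.le_self_pow (by norm_num) _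
      omega⟩
    obtain ⟨m, hm1, hm0, hm2⟩ : ∃ m, p < (m+1)^140 ∧ 1 ≤ m ∧ m^140 ≤ p := by
      refine ⟨Nat.find hPex, Nat.find_spec hPex, ?_, ?_⟩
      · rcases Nat.eq_zero_or_pos (Nat.find hPex) with h | h
        · exfalso
          have h2 := Nat.find_spec hPex
          rw [h] at h2
          norm_num at h2
          omega
        · exact h
      · rcases Nat.eq_zero_or_pos (Nat.find hPex) with h | h
        · rw [h]; norm_num
        · have h3 := Nat.find_min hPex (show Nat.find hPex - 1 < Nat.find hPex by omega)
          push_neg at h3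
          have h4 : (Nat.find hPex - 1) + 1 = Nat.find hPex := by omega
          rwa [h4] at h3
    obtain ⟨q, hq, hq1, hq2⟩ := hint (m+1) (by omega)
    have hpq : p < q := lt_of_lt_of_le hm1 hq1.le
    have hcount : k + 1 ≤ Nat.count Nat.Prime q := by
      by_contra h
      push_neg at h
      have h2 : Nat.nth Nat.Prime (Nat.count Nat.Prime q) ≤ Nat.nth Nat.Prime k :=
        (Nat.nth_le_nth hinf).2 (by omega)
      rw [Nat.nth_count hq] at h2
      omega
    have hnext : Nat.nth Nat.Prime (k+1) ≤ q := by
      calc Nat.nth Nat.Prime (k+1) ≤ Nat.nth Nat.Prime (Nat.count Nat.Prime q) :=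
            (Nat.nth_le_nth hinf).2 hcount
        _ = q := Nat.nth_count hq
    have h140 : (m+2)^140 ≤ m^140 + 280*(m+2)^139 := by
      have h := pow_step m 139
      have e : (139:ℕ) + 1 = 140 := rfl
      rw [e] at h
      omega
    have hq2' : q < (m+2)^140 := by
      have e2 : m + 1 + 1 = m + 2 := by omega
      rw [e2] at hq2
      exact hq2
    have hgap : Nat.nth Nat.Prime (k+1) - p ≤ 280*(m+2)^139 := by
      have hle : Nat.nth Nat.Prime (k+1) ≤ p + 280*(m+2)^139 := by
        calc Nat.nth Nat.Prime (k+1) ≤ q := hnext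
          _ ≤ (m+2)^140 := hq2'.le
          _ ≤ m^140 + 280*(m+2)^139 := h140
          _ ≤ p + 280*(m+2)^139 := Nat.add_le_add_right hm2 _
      omega
    have hpX : (m:ℕ)^140 ≤ Nat.nth Nat.Prime n' := by
      have h1 : Nat.nth Nat.Prime k ≤ Nat.nth Nat.Prime (k+1) := (Nat.nth_le_nth hinf).2 (by omega)
      omega
    have hgapR : ((Nat.nth Nat.Prime (k+1) - p : ℕ) : ℝ) ≤ 280*((m:ℝ)+2)^(139:ℕ) := by
      calc ((Nat.nth Nat.Prime (k+1) - p : ℕ) : ℝ) ≤ ((280*(m+2)^139 : ℕ) : ℝ) :=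
            Nat.cast_le.2 hgap
        _ = 280*((m:ℝ)+2)^(139:ℕ) := by push_cast; ring
    have hpXR : ((m:ℝ))^(140:ℕ) ≤ ((Nat.nth Nat.Prime n' : ℕ) : ℝ) := by exact_mod_cast hpX
    exact le_trans hgapR (gap_final' (m:ℝ) _ (Nat.cast_nonneg m) hpXR hX0)
  · rw [key_eq _ hX0]
    exact part2 _ hXexp
end

section
/- For all real t ≥ 34.5, the inequality log(4 × 8.7 × 17452) + 4t < 8/(3 × 13 × 53.989) · e^t / (L₂(t)^{2/3} · (log L₂(t))^{1/3}) holds, where L₂(t) = (2/3)e^t + 2t + log 48. -/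
open Real

/-- `1.648721 ≤ exp 0.5`. -/
lemma exp_half_lb : (1.648721 : ℝ) ≤ Real.exp 0.5 := by
  have h1 := Real.exp_one_gt_d9
  have h2 : Real.exp 0.5 ^ (2 : ℕ) = Real.exp 1 := by
    rw [← Real.exp_nat_mul]; norm_num
  nlinarith [Real.exp_pos (0.5 : ℝ)]

/-- Lower bound for `exp 34.5`. -/
lemma exp_345_lb : (1.648721 : ℝ) ^ (69 : ℕ) ≤ Real.exp 34.5 := by
  have h : Real.exp 34.5 = Real.exp 0.5 ^ (69 : ℕ) := by
    rw [← Real.exp_nat_mul]; norm_num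
  rw [h]
  exact pow_le_pow_left₀ (by norm_num) exp_half_lb 69

/-- `log 48 < 4`. -/
lemma log48_lt : Real.log 48 < 4 := by
  rw [Real.log_lt_iff_lt_exp (by norm_num)]
  have h : Real.exp 4 = Real.exp 0.5 ^ (8 : ℕ) := by
    rw [← Real.exp_nat_mul]; norm_num
  have h2 : (1.648721 : ℝ) ^ (8 : ℕ) ≤ Real.exp 0.5 ^ (8 : ℕ) :=
    pow_le_pow_left₀ (by norm_num) exp_half_lb 8
  rw [h]
  calc (48 : ℝ) < 1.648721 ^ (8 : ℕ) := by norm_num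
    _ ≤ _ := h2

/-- `log (4 * 8.7 * 17452) < 13.3175`. -/
lemma logA_lt : Real.log (4 * 8.7 * 17452) < 13.3175 := by
  rw [Real.log_lt_iff_lt_exp (by norm_num)]
  have h : Real.exp 13.3175 = Real.exp 0.5 ^ (26 : ℕ) * Real.exp 0.3175 := by
    rw [← Real.exp_nat_mul, ← Real.exp_add]; norm_num
  have h2 : (1.648721 : ℝ) ^ (26 : ℕ) ≤ Real.exp 0.5 ^ (26 : ℕ) :=
    pow_le_pow_left₀ (by norm_num) exp_half_lb 26
  have h3 : (1.3736 : ℝ) ≤ Real.exp 0.3175 := by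
    have := Real.sum_le_exp_of_nonneg (x := 0.3175) (by norm_num) 5
    simp only [Finset.sum_range_succ, Finset.sum_range_zero] at this
    norm_num [Nat.factorial] at this
    linarith
  rw [h]
  calc (4 * 8.7 * 17452 : ℝ) < 1.648721 ^ (26 : ℕ) * 1.3736 := by norm_num
    _ ≤ Real.exp 0.5 ^ (26 : ℕ) * Real.exp 0.3175 := by
        apply mul_le_mul h2 h3 (by norm_num) (by positivity)

/-- Upper bound for `exp 0.4054`. -/
lemma exp_04054_ub : Real.exp 0.4054 ≤ 1.49992 := by
  have h := Real.exp_bound' (x := 0.4054) (by norm_num) (by norm_num) (n := 5) (by norm_num)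
  simp only [Finset.sum_range_succ, Finset.sum_range_zero] at h
  norm_num [Nat.factorial] at h
  linarith

set_option maxHeartbeats 1000000 in
/-- The key numerical inequality for the DPG-graphic result: for `t ≥ 34.5`,
`log(4 × 8.7 × 17452) + 4t < 8/(3 × 13 × 53.989) · eᵗ / (L₂^{2/3} (log L₂)^{1/3})`
where `L₂ = (2/3)eᵗ + 2t + log 48`. -/
theorem key_inequality_dpg (t : ℝ) (ht : 34.5 ≤ t) :
    Real.log (4 * 8.7 * 17452) + 4 * t <
      8 / (3 * 13 * 53.989) * Real.exp t /
        ((2 / 3 * Real.exp t + 2 * t + Real.log 48) ^ ((2 : ℝ) / 3) *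
          (Real.log (2 / 3 * Real.exp t + 2 * t + Real.log 48)) ^ ((1 : ℝ) / 3)) := by
  have hs0 : (0 : ℝ) ≤ t - 34.5 := by linarith
  have hs2 : (0 : ℝ) ≤ (t - 34.5) ^ 2 := by positivity
  have hs3 : (0 : ℝ) ≤ (t - 34.5) ^ 3 := pow_nonneg hs0 3
  have hs4 : (0 : ℝ) ≤ (t - 34.5) ^ 4 := by positivity
  have hs5 : (0 : ℝ) ≤ (t - 34.5) ^ 5 := pow_nonneg hs0 5
  have hC : (961950000000000 : ℝ) ≤ Real.exp 34.5 :=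
    le_trans (by norm_num) exp_345_lb
  -- main exponential lower bound
  have hE5 : (961950000000000 : ℝ) *
      (1 + (t - 34.5) + (t - 34.5) ^ 2 / 2 + (t - 34.5) ^ 3 / 6 + (t - 34.5) ^ 4 / 24
        + (t - 34.5) ^ 5 / 120) ≤ Real.exp t := by
    have hq := Real.sum_le_exp_of_nonneg (x := t - 34.5) hs0 6
    simp only [Finset.sum_range_succ, Finset.sum_range_zero] at hq
    norm_num [Nat.factorial] at hq
    have hsplit : Real.exp t = Real.exp 34.5 * Real.exp (t - 34.5) := by
      rw [← Real.exp_add]; ring_nf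
    have hqnn : (0 : ℝ) ≤ 1 + (t - 34.5) + (t - 34.5) ^ 2 / 2 + (t - 34.5) ^ 3 / 6
        + (t - 34.5) ^ 4 / 24 + (t - 34.5) ^ 5 / 120 := by positivity
    calc (961950000000000 : ℝ) *
        (1 + (t - 34.5) + (t - 34.5) ^ 2 / 2 + (t - 34.5) ^ 3 / 6 + (t - 34.5) ^ 4 / 24
          + (t - 34.5) ^ 5 / 120)
        ≤ Real.exp 34.5 * Real.exp (t - 34.5) := by
          apply mul_le_mul hC (by linarith) hqnn (le_of_lt (Real.exp_pos _))
      _ = Real.exp t := hsplit.symm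
  have hEpos := Real.exp_pos t
  have hElarge : (961950000000000 : ℝ) ≤ Real.exp t := by nlinarith [hE5]
  set L : ℝ := 2 / 3 * Real.exp t + 2 * t + Real.log 48 with hLdef
  have hlog48pos : 0 < Real.log 48 := Real.log_pos (by norm_num)
  have hL0 : 0 < L := by rw [hLdef]; nlinarith
  have hL1 : 1 < L := by rw [hLdef]; nlinarith
  have hlogL0 : 0 < Real.log L := Real.log_pos hL1
  -- upper bound for L
  have hM : L ≤ 2 / 3 * 1.000001 * Real.exp t := by
    rw [hLdef]
    have h48 := log48_lt
    nlinarith [hE5, hs2, hs3, hs4, hs5]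
  have hMpos : (0 : ℝ) < 2 / 3 * 1.000001 * Real.exp t := by positivity
  -- bound on log L
  have hlogL : Real.log L ≤ t - 0.4054 := by
    have h1 : Real.log L ≤ Real.log (2 / 3 * 1.000001 * Real.exp t) :=
      Real.log_le_log hL0 hM
    have h2 : Real.log (2 / 3 * 1.000001 * Real.exp t)
        = Real.log (2 / 3 * 1.000001) + t := by
      rw [Real.log_mul (by norm_num) (ne_of_gt hEpos), Real.log_exp]
    have h3 : Real.log (2 / 3 * 1.000001 : ℝ) ≤ -0.4054 := by
      rw [Real.log_le_iff_le_exp (by norm_num)]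
      have hid : Real.exp (-0.4054) * Real.exp 0.4054 = 1 := by
        rw [← Real.exp_add]; norm_num
      nlinarith [exp_04054_ub, Real.exp_pos (0.4054 : ℝ), Real.exp_pos (-0.4054 : ℝ)]
    linarith
  have htb : (0 : ℝ) < t - 0.4054 := by linarith
  -- denominator bounds
  have hD2 : L ^ ((2 : ℝ) / 3) ≤ (2 / 3 * 1.000001 * Real.exp t) ^ ((2 : ℝ) / 3) :=
    Real.rpow_le_rpow hL0.le hM (by norm_num)
  have hD3 : (Real.log L) ^ ((1 : ℝ) / 3) ≤ (t - 0.4054) ^ ((1 : ℝ) / 3) :=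
    Real.rpow_le_rpow hlogL0.le hlogL (by norm_num)
  have hDpos : 0 < L ^ ((2 : ℝ) / 3) * (Real.log L) ^ ((1 : ℝ) / 3) := by
    apply mul_pos (Real.rpow_pos_of_pos hL0 _) (Real.rpow_pos_of_pos hlogL0 _)
  have hD'pos : 0 < (2 / 3 * 1.000001 * Real.exp t) ^ ((2 : ℝ) / 3)
      * (t - 0.4054) ^ ((1 : ℝ) / 3) := by
    apply mul_pos (Real.rpow_pos_of_pos hMpos _) (Real.rpow_pos_of_pos htb _)
  have hDle : L ^ ((2 : ℝ) / 3) * (Real.log L) ^ ((1 : ℝ) / 3)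
      ≤ (2 / 3 * 1.000001 * Real.exp t) ^ ((2 : ℝ) / 3) * (t - 0.4054) ^ ((1 : ℝ) / 3) := by
    apply mul_le_mul hD2 hD3 (Real.rpow_nonneg hlogL0.le _) (Real.rpow_nonneg hMpos.le _)
  -- the key middle step
  have hLHSpos : 0 < Real.log (4 * 8.7 * 17452) + 4 * t := by
    have : (0:ℝ) < Real.log (4 * 8.7 * 17452) := Real.log_pos (by norm_num)
    linarith
  have hA : Real.log (4 * 8.7 * 17452) + 4 * t ≤ 13.3175 + 4 * t := by
    have := logA_lt; linarith
  have hcEpos : (0 : ℝ) < 8 / (3 * 13 * 53.989) * Real.exp t := by positivity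
  have step2 : Real.log (4 * 8.7 * 17452) + 4 * t <
      8 / (3 * 13 * 53.989) * Real.exp t /
        ((2 / 3 * 1.000001 * Real.exp t) ^ ((2 : ℝ) / 3) * (t - 0.4054) ^ ((1 : ℝ) / 3)) := by
    rw [lt_div_iff₀ hD'pos]
    apply lt_of_pow_lt_pow_left₀ 3 hcEpos.le
    have e1 : ((2 / 3 * 1.000001 * Real.exp t) ^ ((2 : ℝ) / 3)) ^ (3 : ℕ)
        = (2 / 3 * 1.000001 * Real.exp t) ^ (2 : ℕ) := by
      rw [← Real.rpow_natCast ((2 / 3 * 1.000001 * Real.exp t) ^ ((2 : ℝ) / 3)) 3,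
        ← Real.rpow_mul hMpos.le, ← Real.rpow_natCast (2 / 3 * 1.000001 * Real.exp t) 2]
      norm_num
    have e2 : ((t - 0.4054) ^ ((1 : ℝ) / 3)) ^ (3 : ℕ) = t - 0.4054 := by
      rw [← Real.rpow_natCast ((t - 0.4054) ^ ((1 : ℝ) / 3)) 3, ← Real.rpow_mul htb.le]
      norm_num
    have expand : ((Real.log (4 * 8.7 * 17452) + 4 * t) *
        ((2 / 3 * 1.000001 * Real.exp t) ^ ((2 : ℝ) / 3) * (t - 0.4054) ^ ((1 : ℝ) / 3))) ^ (3:ℕ)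
        = (Real.log (4 * 8.7 * 17452) + 4 * t) ^ (3:ℕ) *
          (((2 / 3 * 1.000001 * Real.exp t) ^ ((2 : ℝ) / 3)) ^ (3:ℕ) *
            (((t - 0.4054) ^ ((1 : ℝ) / 3)) ^ (3:ℕ))) := by ring
    rw [expand, e1, e2]
    -- now pure algebra: A³ bound then polynomial inequality
    have key : (13.3175 + 4 * t) ^ (3:ℕ) * (2 / 3 * 1.000001) ^ (2:ℕ) * (t - 0.4054)
        < (8 / (3 * 13 * 53.989)) ^ (3:ℕ) * Real.exp t := by
      linarith [hE5, hs0, hs2, hs3, hs4, hs5]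
    have hA3 : (Real.log (4 * 8.7 * 17452) + 4 * t) ^ (3:ℕ) ≤ (13.3175 + 4 * t) ^ (3:ℕ) :=
      pow_le_pow_left₀ hLHSpos.le hA 3
    have hM2nn : (0:ℝ) ≤ (2 / 3 * 1.000001 * Real.exp t) ^ (2:ℕ) := by positivity
    calc (Real.log (4 * 8.7 * 17452) + 4 * t) ^ (3:ℕ) *
          ((2 / 3 * 1.000001 * Real.exp t) ^ (2:ℕ) * (t - 0.4054))
        ≤ (13.3175 + 4 * t) ^ (3:ℕ) * ((2 / 3 * 1.000001 * Real.exp t) ^ (2:ℕ) * (t - 0.4054)) := by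
          apply mul_le_mul_of_nonneg_right hA3 (by positivity)
      _ = ((13.3175 + 4 * t) ^ (3:ℕ) * (2 / 3 * 1.000001) ^ (2:ℕ) * (t - 0.4054))
            * Real.exp t ^ (2:ℕ) := by ring
      _ < ((8 / (3 * 13 * 53.989)) ^ (3:ℕ) * Real.exp t) * Real.exp t ^ (2:ℕ) := by
          apply mul_lt_mul_of_pos_right key (by positivity)
      _ = (8 / (3 * 13 * 53.989) * Real.exp t) ^ (3:ℕ) := by ring
  calc Real.log (4 * 8.7 * 17452) + 4 * t
      < 8 / (3 * 13 * 53.989) * Real.exp t /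
        ((2 / 3 * 1.000001 * Real.exp t) ^ ((2 : ℝ) / 3) * (t - 0.4054) ^ ((1 : ℝ) / 3)) := step2
    _ ≤ 8 / (3 * 13 * 53.989) * Real.exp t /
        (L ^ ((2 : ℝ) / 3) * (Real.log L) ^ ((1 : ℝ) / 3)) := by
        apply div_le_div_of_nonneg_left hcEpos.le hDpos hDle
end
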